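/- arXiv:1810.05381 — 2 statements merged into one kernel-verified Lean document; each statement's English description precedes it below -/
import Mathlib

section
/- Let P ∈ B(H) be a bounded idempotent and let S := { J ∈ B(H) : J is a symmetry and JPJ = P* }. Then the following are equivalent: (a) S has a minimum in the Loewner order (i.e., there exists J0 ∈ S with J0 ≤ J for all J ∈ S); (b) P is an orthogonal projection (P = P* = P²); (c) the operator −I is the minimum of S in the Loewner order. -/
/-!
Every symmetry `J` satisfies `-1 ≤ J`, since `J + 1 = ½ (J + 1)* (J + 1)`; and if `J ≤ -J`,
conjugating by `x = J + 1` (for which `x J = x`) gives `x* x ≤ -(x* x)`, so `x* x = 0` and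
`J = -1`. As `J ↦ -J` preserves `S`, a minimum `J₀` of `S` satisfies `J₀ ≤ -J₀`, hence
`J₀ = -1`, and `-1 ∈ S` says exactly `P* = P`.
-/

open ContinuousLinearMap

variable {H : Type*} [NormedAddCommGroup H] [InnerProductSpace ℂ H] [CompleteSpace H]

/-- A symmetry (self-adjoint involution): `J = J* = J⁻¹`. -/
def IsSymmetry (J : H →L[ℂ] H) : Prop := IsSelfAdjoint J ∧ J * J = 1

section CStarAlgebra

variable {A : Type*} [CStarAlgebra A] [PartialOrder A] [StarOrderedRing A] {j : A}

lemma IsSelfAdjoint.neg_one_le_of_mul_self_eq_one (hj : IsSelfAdjoint j) (hj2 : j * j = 1) :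
    -1 ≤ j := by
  have hsq : star (j + 1) * (j + 1) = (2 : ℝ) • (j + 1) := by
    rw [star_add, star_one, hj.star_eq, add_mul, mul_add, mul_add, hj2, two_smul]
    noncomm_ring
  have hx : j + 1 = (1 / 2 : ℝ) • (star (j + 1) * (j + 1)) := by
    rw [hsq, smul_smul]
    norm_num
  rw [← sub_nonneg, sub_neg_eq_add, hx]
  exact smul_nonneg (by norm_num) (star_mul_self_nonneg _)

lemma IsSelfAdjoint.eq_neg_one_of_le_neg (hj : IsSelfAdjoint j) (hj2 : j * j = 1)
    (h : j ≤ -j) : j = -1 := by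
  set x := j + 1 with hx_def
  have hx : IsSelfAdjoint x := hj.add (.one _)
  have hxj : x * j = x := by rw [hx_def, add_mul, hj2, one_mul, add_comm]
  have hconj : star x * x ≤ -(star x * x) := by
    simpa only [hx.star_eq, mul_neg, neg_mul, hxj] using hx.conjugate_le_conjugate h
  have hzero : star x * x = 0 :=
    le_antisymm (hconj.trans (neg_nonpos.2 (star_mul_self_nonneg x))) (star_mul_self_nonneg x)
  rw [CStarRing.star_mul_self_eq_zero_iff] at hzero
  exact eq_neg_of_add_eq_zero_left hzero

end CStarAlgebra

namespace IsSymmetry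

variable {J : H →L[ℂ] H}

lemma neg (hJ : IsSymmetry J) : IsSymmetry (-J) := ⟨hJ.1.neg, by rw [neg_mul_neg, hJ.2]⟩

lemma neg_one_le (hJ : IsSymmetry J) : -1 ≤ J := hJ.1.neg_one_le_of_mul_self_eq_one hJ.2

lemma eq_neg_one_of_le_neg (hJ : IsSymmetry J) (h : J ≤ -J) : J = -1 :=
  hJ.1.eq_neg_one_of_le_neg hJ.2 h

end IsSymmetry

lemma isSymmetry_neg_one : IsSymmetry (-1 : H →L[ℂ] H) := ⟨(IsSelfAdjoint.one _).neg, by simp⟩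

theorem min_symmetry_JPJ_tfae_general (P : H →L[ℂ] H) :
    let S : Set (H →L[ℂ] H) := {J | IsSymmetry J ∧ J * P * J = adjoint P}
    ((∃ J0 ∈ S, ∀ J ∈ S, (J - J0).IsPositive) ↔ adjoint P = P) ∧
      (adjoint P = P ↔
        (-1 : H →L[ℂ] H) ∈ S ∧ ∀ J ∈ S, (J - (-1 : H →L[ℂ] H)).IsPositive) := by
  intro S
  have neg_mem {J : H →L[ℂ] H} (hJ : J ∈ S) : -J ∈ S :=
    ⟨hJ.1.neg, by rw [neg_mul, mul_neg, neg_mul, neg_neg, hJ.2]⟩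
  have neg_one_mem_iff : (-1 : H →L[ℂ] H) ∈ S ↔ adjoint P = P := by
    simp only [S, Set.mem_ofPred_eq, neg_mul, one_mul, mul_neg, mul_one, neg_neg, eq_comm,
      isSymmetry_neg_one, true_and]
  have neg_one_isLeast (hP : adjoint P = P) :
      (-1 : H →L[ℂ] H) ∈ S ∧ ∀ J ∈ S, (J - (-1 : H →L[ℂ] H)).IsPositive :=
    ⟨neg_one_mem_iff.2 hP, fun J hJ ↦ (le_def _ _).1 hJ.1.neg_one_le⟩
  refine ⟨⟨?_, fun hP ↦ ⟨-1, neg_one_isLeast hP⟩⟩, neg_one_isLeast, fun h ↦ neg_one_mem_iff.1 h.1⟩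
  rintro ⟨J0, hJ0, hmin⟩
  have hJ0_eq : J0 = -1 := hJ0.1.eq_neg_one_of_le_neg ((le_def _ _).2 (hmin _ (neg_mem hJ0)))
  exact neg_one_mem_iff.1 (hJ0_eq ▸ hJ0)

/-- For the set `S` of symmetries `J` with `JPJ = P*`:
`S` has a Loewner minimum iff `P` is an orthogonal projection iff
`−I` is the minimum of `S`. -/
theorem min_symmetry_JPJ_tfae (P : H →L[ℂ] H) (hP : P * P = P) :
    let S : Set (H →L[ℂ] H) := {J | IsSymmetry J ∧ J * P * J = adjoint P}
    ((∃ J0 ∈ S, ∀ J ∈ S, (J - J0).IsPositive) ↔ adjoint P = P) ∧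
      (adjoint P = P ↔
        (-1 : H →L[ℂ] H) ∈ S ∧ ∀ J ∈ S, (J - (-1 : H →L[ℂ] H)).IsPositive) :=
  min_symmetry_JPJ_tfae_general P
end

section
/- Let P ∈ B(H) be a bounded idempotent. Then P is unitarily equivalent to P*, i.e., there exists a unitary operator U ∈ B(H) such that P = U* P* U. -/
/-!
For an idempotent `p`, the self-adjoint element `t = p + p* - 1` intertwines `p` and `p*` in both
directions: `t p = p* t` and `t p* = p t`. Moreover `t² = 1 + (p - p*)*(p - p*)` is invertible and
commutes with `p`, hence so does `|t| = √(t²)`. The unitary `u = t |t|⁻¹` then still satisfies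
`u p = p* u`, i.e. `p = u* p* u`.
-/

open ContinuousLinearMap

variable {H : Type*} [NormedAddCommGroup H] [InnerProductSpace ℂ H] [CompleteSpace H]

section StarRing

variable {R : Type*} [Ring R] [StarRing R]

lemma isSelfAdjoint_add_star_sub_one (p : R) : IsSelfAdjoint (p + star p - 1) := by
  simp [isSelfAdjoint_iff, add_comm]

lemma add_star_sub_one_mul_of_isIdempotentElem {p : R} (hp : IsIdempotentElem p) :
    (p + star p - 1) * p = star p * (p + star p - 1) := by
  have hp' : star p * star p = star p := hp.star.eq
  simp only [sub_mul, mul_sub, add_mul, mul_add, one_mul, mul_one, hp.eq, hp']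
  abel

lemma add_star_sub_one_mul_self_of_isIdempotentElem {p : R} (hp : IsIdempotentElem p) :
    (p + star p - 1) * (p + star p - 1) = 1 + star (p - star p) * (p - star p) := by
  have hp' : star p * star p = star p := hp.star.eq
  simp only [star_sub, star_star, sub_mul, mul_sub, add_mul, mul_add, one_mul, mul_one, hp.eq,
    hp']
  abel

lemma commute_add_star_sub_one_mul_self_of_isIdempotentElem {p : R} (hp : IsIdempotentElem p) :
    Commute ((p + star p - 1) * (p + star p - 1)) p := by
  have hstar : (p + star p - 1) * star p = p * (p + star p - 1) := by
    simpa [add_comm] using add_star_sub_one_mul_of_isIdempotentElem hp.star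
  simp only [Commute, SemiconjBy, mul_assoc, add_star_sub_one_mul_of_isIdempotentElem hp]
  rw [← mul_assoc, hstar, mul_assoc]

end StarRing

section CStarAlgebra

variable {A : Type*} [CStarAlgebra A] [PartialOrder A] [StarOrderedRing A]

/-- The witness is the unitary factor `t |t|⁻¹` of the polar decomposition of `t`. -/
lemma exists_mem_unitary_eq_star_mul_mul_of_mul_eq {a b t : A} (ht : IsUnit t)
    (hab : t * a = b * t) (hcomm : Commute (star t * t) a) :
    ∃ u ∈ unitary A, a = star u * b * u := by
  lift t to Aˣ using ht
  obtain ⟨r, hr⟩ : IsUnit (CFC.abs (t : A)) :=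
    (CFC.isUnit_sqrt_iff _ (star_mul_self_nonneg _)).mpr (t.isUnit.star.mul t.isUnit)
  have hu : (t * ↑r⁻¹ : A) ∈ unitary A := by
    rw [Units.mul_inv_mem_unitary, Units.ext_iff, Units.val_mul, Units.val_mul, Units.coe_star,
      Units.coe_star, hr, (CFC.abs_nonneg (t : A)).isSelfAdjoint.star_eq, CFC.abs_mul_abs]
  have hra : Commute (↑r⁻¹ : A) a :=
    (hr ▸ hcomm.cfcₙ_nnreal NNReal.sqrt : Commute (r : A) a).units_inv_left
  refine ⟨t * ↑r⁻¹, hu, ?_⟩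
  calc a = star (t * ↑r⁻¹ : A) * (t * ↑r⁻¹) * a := by
        rw [Unitary.star_mul_self_of_mem hu, one_mul]
    _ = star (t * ↑r⁻¹ : A) * b * (t * ↑r⁻¹) := by
        rw [mul_assoc, mul_assoc, hra.eq, ← mul_assoc (t : A), hab, mul_assoc, mul_assoc]

lemma exists_mem_unitary_eq_star_mul_star_mul_of_isIdempotentElem {p : A}
    (hp : IsIdempotentElem p) :
    ∃ u ∈ unitary A, p = star u * star p * u := by
  have ht : IsSelfAdjoint (p + star p - 1) := isSelfAdjoint_add_star_sub_one p
  have htt : IsUnit ((p + star p - 1) * (p + star p - 1)) := by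
    rw [add_star_sub_one_mul_self_of_isIdempotentElem hp]
    exact (isStrictlyPositive_one.add_nonneg (star_mul_self_nonneg _)).isUnit
  refine exists_mem_unitary_eq_star_mul_mul_of_mul_eq ((Commute.refl _).isUnit_mul_iff.mp htt).1
    (add_star_sub_one_mul_of_isIdempotentElem hp) ?_
  rw [ht.star_eq]
  exact commute_add_star_sub_one_mul_self_of_isIdempotentElem hp

end CStarAlgebra

/-- Every bounded idempotent is unitarily equivalent to its adjoint. -/
theorem idem_unitarily_equiv_adjoint (P : H →L[ℂ] H) (hP : P * P = P) :
    ∃ U ∈ unitary (H →L[ℂ] H), P = adjoint U * adjoint P * U := by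
  simpa only [star_eq_adjoint] using exists_mem_unitary_eq_star_mul_star_mul_of_isIdempotentElem hP
end
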